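/- arXiv:1903.06484 — 3 statements merged into one kernel-verified Lean document; each statement's English description precedes it below -/
import Mathlib

section
/- For any monomial order ≺ on the polynomial ring k[x_0,…,x_n] and any finite subset A of monomials (identified with exponent vectors in ℕ^{n+1}), there exists a weight vector ω ∈ ℕ^{n+1} such that for all α, β ∈ A, α ≺ β if and only if ω·α < ω·β (the ordinary inner product). -/
/-- Monomials in `n+1` variables, identified with exponent vectors. -/
abbrev Mon (n : ℕ) := Fin (n + 1) →₀ ℕ

/-- The inner product `ω·α = ω₀α₀ + ⋯ + ωₙαₙ`. -/
def wdot {n : ℕ} (ω : Fin (n + 1) → ℕ) (α : Mon n) : ℕ := ∑ i, ω i * α i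

/-- A monomial order on `k[x₀,…,xₙ]`, viewed as a relation on exponent vectors:
a strict linear order which is well-founded, has `1 = x^0` as least element and is
compatible with multiplication of monomials. -/
def IsMonomialOrder {n : ℕ} (r : Mon n → Mon n → Prop) : Prop :=
  (∀ α β : Mon n, r α β ∨ α = β ∨ r β α) ∧
  (∀ α β γ : Mon n, r α β → r β γ → r α γ) ∧
  (∀ α : Mon n, ¬ r α α) ∧
  WellFounded r ∧
  (∀ α : Mon n, α ≠ 0 → r 0 α) ∧
  (∀ α β γ : Mon n, r α β → r (α + γ) (β + γ))


/-!
The differences `β - α` of pairs `α ≺ β` generate, under addition, only further such differences,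
because a monomial order is compatible with addition; none of them is `0`. Adding the unit vectors
`e_i` (as `0 ≺ e_i`) keeps this true. Gordan's alternative over `ℤ`, proved by Fourier–Motzkin
elimination, then yields an integer vector `ω` pairing positively with every generator: it is
positive on each `e_i`, so `ω ∈ ℕ^{n+1}`, and it satisfies `α ≺ β → ω·α < ω·β` on `A`, which
totality of `≺` upgrades to an equivalence.
-/

open Matrix

theorem AddSubsemigroup.zsmul_mem_of_pos {G : Type*} [AddGroup G] (S : AddSubsemigroup G)
    {x : G} (hx : x ∈ S) {c : ℤ} (hc : 0 < c) : c • x ∈ S := by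
  obtain ⟨k, rfl⟩ := Int.eq_succ_of_zero_lt hc
  induction k with
  | zero => simpa using hx
  | succ k ih => simpa [add_zsmul] using add_mem (ih (by omega)) hx

theorem exists_mul_add_mul_pos {ι : Type*} (s : Finset ι) (a b : ι → ℤ)
    (hzero : ∀ i ∈ s, b i = 0 → 0 < a i)
    (hmixed : ∀ i ∈ s, ∀ j ∈ s, 0 < b i → b j < 0 → 0 < b i * a j - b j * a i) :
    ∃ c m : ℤ, 0 < c ∧ ∀ i ∈ s, 0 < c * a i + m * b i := by
  classical
  set f : ι → ℚ := fun i => -a i / b i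
  obtain ⟨q, hlow, hup⟩ := Finset.exists_between' ((s.filter (0 < b ·)).image f)
    ((s.filter (b · < 0)).image f) (by
      simp only [Finset.mem_image, Finset.mem_filter]
      rintro _ ⟨i, ⟨hi, hbi⟩, rfl⟩ _ ⟨j, ⟨hj, hbj⟩, rfl⟩
      have hbi' : (0 : ℚ) < b i := by exact_mod_cast hbi
      have hbj' : (b j : ℚ) < 0 := by exact_mod_cast hbj
      have key : (0 : ℚ) < b i * a j - b j * a i := by exact_mod_cast hmixed i hi j hj hbi hbj
      rw [div_lt_iff₀ hbi', div_mul_eq_mul_div, lt_div_iff_of_neg hbj']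
      linarith)
  -- `q` separates the thresholds `-a i / b i`; clearing its denominator gives `c` and `m`.
  have hq : ∀ i ∈ s, 0 < (a i : ℚ) + q * b i := by
    intro i hi
    rcases lt_trichotomy (b i) 0 with hb | hb | hb
    · have := hup (f i) (Finset.mem_image_of_mem f (Finset.mem_filter.mpr ⟨hi, hb⟩))
      rw [lt_div_iff_of_neg (by exact_mod_cast hb)] at this
      linarith
    · simpa [hb] using hzero i hi hb
    · have := hlow (f i) (Finset.mem_image_of_mem f (Finset.mem_filter.mpr ⟨hi, hb⟩))
      rw [div_lt_iff₀ (by exact_mod_cast hb)] at this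
      linarith
  refine ⟨q.den, q.num, by exact_mod_cast q.pos, fun i hi => ?_⟩
  have : (0 : ℚ) < q.den * (a i + q * b i) := mul_pos (by exact_mod_cast q.pos) (hq i hi)
  rw [mul_add, ← mul_assoc, mul_comm (q.den : ℚ) q, Rat.mul_den_eq_num] at this
  exact_mod_cast this

def fourierMotzkin {d : ℕ} (V : Finset (Fin (d + 1) → ℤ)) : Finset (Fin d → ℤ) :=
  (V.filter (· 0 = 0)).image vecTail ∪
    ((V.filter (0 < · 0)) ×ˢ (V.filter (· 0 < 0))).image
      fun pn => vecTail ((-pn.2 0) • pn.1 + pn.1 0 • pn.2)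

theorem exists_mem_closure_of_mem_closure_fourierMotzkin {d : ℕ} {V : Finset (Fin (d + 1) → ℤ)}
    {x : Fin d → ℤ} (hx : x ∈ AddSubsemigroup.closure (fourierMotzkin V : Set (Fin d → ℤ))) :
    ∃ s ∈ AddSubsemigroup.closure (V : Set (Fin (d + 1) → ℤ)), s 0 = 0 ∧ vecTail s = x := by
  induction hx using AddSubsemigroup.closure_induction with
  | mem x hx =>
    simp only [fourierMotzkin, Finset.coe_union, Finset.coe_image, Finset.coe_filter,
      Set.mem_union, Set.mem_image, Set.mem_ofPred_eq, Finset.coe_product, Set.mem_prod] at hx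
    rcases hx with ⟨z, ⟨hz, hz0⟩, rfl⟩ | ⟨⟨p, m⟩, ⟨⟨hp, hp0⟩, hm, hm0⟩, rfl⟩
    · exact ⟨z, AddSubsemigroup.subset_closure hz, hz0, rfl⟩
    · refine ⟨_, add_mem ?_ ?_, by simp [mul_comm], rfl⟩
      · exact AddSubsemigroup.zsmul_mem_of_pos _ (AddSubsemigroup.subset_closure hp) (by omega)
      · exact AddSubsemigroup.zsmul_mem_of_pos _ (AddSubsemigroup.subset_closure hm) hp0
  | add x y _ _ hx hy =>
    obtain ⟨s, hs, hs0, rfl⟩ := hx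
    obtain ⟨t, ht, ht0, rfl⟩ := hy
    exact ⟨s + t, add_mem hs ht, by simp [hs0, ht0], rfl⟩

theorem zero_notMem_closure_fourierMotzkin {d : ℕ} {V : Finset (Fin (d + 1) → ℤ)}
    (hV : 0 ∉ AddSubsemigroup.closure (V : Set (Fin (d + 1) → ℤ))) :
    0 ∉ AddSubsemigroup.closure (fourierMotzkin V : Set (Fin d → ℤ)) := by
  intro h0
  obtain ⟨s, hs, hs0, hst⟩ := exists_mem_closure_of_mem_closure_fourierMotzkin h0
  rw [← cons_head_tail s, vecHead, hs0, hst] at hs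
  simp_all

theorem exists_dotProduct_pos_of_fourierMotzkin {d : ℕ} {V : Finset (Fin (d + 1) → ℤ)}
    {ω : Fin d → ℤ} (hω : ∀ w ∈ fourierMotzkin V, 0 < ω ⬝ᵥ w) :
    ∃ ω' : Fin (d + 1) → ℤ, ∀ v ∈ V, 0 < ω' ⬝ᵥ v := by
  obtain ⟨c, m, hc, hcm⟩ := exists_mul_add_mul_pos V (fun v => ω ⬝ᵥ vecTail v) (· 0)
    (fun v hv hv0 => hω _ (Finset.mem_union_left _ (Finset.mem_image_of_mem _
      (Finset.mem_filter.mpr ⟨hv, hv0⟩))))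
    (fun p hp m hm hp0 hm0 => by
      have := hω _ (Finset.mem_union_right _ (Finset.mem_image.mpr ⟨(p, m),
        Finset.mem_product.mpr ⟨Finset.mem_filter.mpr ⟨hp, hp0⟩, Finset.mem_filter.mpr ⟨hm, hm0⟩⟩,
        rfl⟩))
      change 0 < ω ⬝ᵥ ((-m 0) • vecTail p + p 0 • vecTail m) at this
      simp only [dotProduct_add, dotProduct_smul, smul_eq_mul] at this
      linarith)
  refine ⟨vecCons m (c • ω), fun v hv => ?_⟩
  rw [cons_dotProduct, smul_dotProduct, vecHead, smul_eq_mul]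
  linarith [hcm v hv]

theorem exists_dotProduct_pos_of_zero_notMem_closure {d : ℕ} (V : Finset (Fin d → ℤ))
    (hV : 0 ∉ AddSubsemigroup.closure (V : Set (Fin d → ℤ))) :
    ∃ ω : Fin d → ℤ, ∀ v ∈ V, 0 < ω ⬝ᵥ v := by
  induction d with
  | zero =>
    refine ⟨0, fun v hv => absurd ?_ hV⟩
    rw [Subsingleton.elim 0 v]
    exact AddSubsemigroup.subset_closure hv
  | succ d ih =>
    obtain ⟨ω, hω⟩ := ih (fourierMotzkin V) (zero_notMem_closure_fourierMotzkin hV)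
    exact exists_dotProduct_pos_of_fourierMotzkin hω

theorem IsMonomialOrder.add_lt_add {n : ℕ} {r : Mon n → Mon n → Prop} (hr : IsMonomialOrder r)
    {α β γ δ : Mon n} (hαβ : r α β) (hγδ : r γ δ) : r (α + γ) (β + δ) := by
  obtain ⟨-, htrans, -, -, -, hadd⟩ := hr
  refine htrans _ (β + γ) _ (hadd _ _ _ hαβ) ?_
  simpa only [add_comm β] using hadd _ _ β hγδ

def Mon.toIntVec {n : ℕ} (α : Mon n) : Fin (n + 1) → ℤ := fun i => α i

theorem Mon.toIntVec_add {n : ℕ} (α β : Mon n) : (α + β).toIntVec = α.toIntVec + β.toIntVec := by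
  ext i
  simp [Mon.toIntVec]

theorem Mon.toIntVec_injective {n : ℕ} : Function.Injective (Mon.toIntVec (n := n)) :=
  fun α β h => Finsupp.ext fun i => by simpa [Mon.toIntVec] using congrFun h i

theorem Mon.toIntVec_single {n : ℕ} (i : Fin (n + 1)) :
    Mon.toIntVec (Finsupp.single i 1 : Mon n) = Pi.single i 1 := by
  ext j
  simp [Mon.toIntVec, Finsupp.single_apply, Pi.single_apply, eq_comm]

theorem natCast_wdot {n : ℕ} (ω : Fin (n + 1) → ℕ) (α : Mon n) :
    (wdot ω α : ℤ) = (fun i => (ω i : ℤ)) ⬝ᵥ α.toIntVec := by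
  simp [wdot, dotProduct, Mon.toIntVec]

open Classical in
-- The unit vectors `e_i = e_i - 0` are included to force the weights to be positive.
noncomputable def orderDifferences {n : ℕ} (r : Mon n → Mon n → Prop) (A : Finset (Mon n)) :
    Finset (Fin (n + 1) → ℤ) :=
  ((A ×ˢ A).filter fun p => r p.1 p.2).image (fun p => p.2.toIntVec - p.1.toIntVec) ∪
    Finset.univ.image fun i => Pi.single i 1

theorem exists_rel_of_mem_closure_orderDifferences {n : ℕ} {r : Mon n → Mon n → Prop}
    (hr : IsMonomialOrder r) {A : Finset (Mon n)} {x : Fin (n + 1) → ℤ}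
    (hx : x ∈ AddSubsemigroup.closure (orderDifferences r A : Set (Fin (n + 1) → ℤ))) :
    ∃ α β, r α β ∧ x = β.toIntVec - α.toIntVec := by
  induction hx using AddSubsemigroup.closure_induction with
  | mem x hx =>
    simp only [orderDifferences, Finset.coe_union, Finset.coe_image, Finset.coe_filter,
      Set.mem_union, Set.mem_image, Finset.mem_product, Set.mem_ofPred_eq, Finset.coe_univ,
      Set.mem_univ, true_and] at hx
    rcases hx with ⟨⟨α, β⟩, ⟨-, hαβ⟩, rfl⟩ | ⟨i, rfl⟩
    · exact ⟨α, β, hαβ, rfl⟩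
    · obtain ⟨-, -, -, -, hzero, -⟩ := hr
      refine ⟨0, Finsupp.single i 1, hzero _ (by simp), ?_⟩
      ext j
      simp [Mon.toIntVec_single, Mon.toIntVec]
  | add x y _ _ hx hy =>
    obtain ⟨α, β, hαβ, rfl⟩ := hx
    obtain ⟨γ, δ, hγδ, rfl⟩ := hy
    refine ⟨α + γ, β + δ, hr.add_lt_add hαβ hγδ, ?_⟩
    simp only [Mon.toIntVec_add]
    abel

theorem zero_notMem_closure_orderDifferences {n : ℕ} {r : Mon n → Mon n → Prop}
    (hr : IsMonomialOrder r) (A : Finset (Mon n)) :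
    0 ∉ AddSubsemigroup.closure (orderDifferences r A : Set (Fin (n + 1) → ℤ)) := by
  intro h0
  obtain ⟨α, β, hαβ, hβα⟩ := exists_rel_of_mem_closure_orderDifferences hr h0
  rw [eq_comm, sub_eq_zero] at hβα
  obtain ⟨-, -, hirrefl, -⟩ := hr
  exact hirrefl α (Mon.toIntVec_injective hβα ▸ hαβ)

theorem mem_orderDifferences {n : ℕ} {r : Mon n → Mon n → Prop} {A : Finset (Mon n)}
    {α β : Mon n} (hα : α ∈ A) (hβ : β ∈ A) (hαβ : r α β) :
    β.toIntVec - α.toIntVec ∈ orderDifferences r A := by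
  classical
  exact Finset.mem_union_left _ <| Finset.mem_image.mpr
    ⟨(α, β), Finset.mem_filter.mpr ⟨Finset.mem_product.mpr ⟨hα, hβ⟩, hαβ⟩, rfl⟩

theorem single_mem_orderDifferences {n : ℕ} (r : Mon n → Mon n → Prop) (A : Finset (Mon n))
    (i : Fin (n + 1)) : Pi.single i 1 ∈ orderDifferences r A :=
  Finset.mem_union_right _ <| Finset.mem_image_of_mem _ (Finset.mem_univ i)

theorem weight_vector_represents_monomial_order_general {n : ℕ}
    (r : Mon n → Mon n → Prop) (hr : IsMonomialOrder r) (A : Finset (Mon n)) :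
    ∃ ω : Fin (n + 1) → ℕ, ∀ α ∈ A, ∀ β ∈ A, (r α β ↔ wdot ω α < wdot ω β) := by
  obtain ⟨ω, hω⟩ := exists_dotProduct_pos_of_zero_notMem_closure _
    (zero_notMem_closure_orderDifferences hr A)
  have hω_pos (i : Fin (n + 1)) : 0 < ω i := by
    simpa using hω _ (single_mem_orderDifferences r A i)
  set ν : Fin (n + 1) → ℕ := fun i => (ω i).toNat
  have hν : (fun i => (ν i : ℤ)) = ω := funext fun i => Int.toNat_of_nonneg (hω_pos i).le
  have hlt : ∀ α ∈ A, ∀ β ∈ A, r α β → wdot ν α < wdot ν β := by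
    intro α hα β hβ hαβ
    have := hω _ (mem_orderDifferences hα hβ hαβ)
    rw [dotProduct_sub, ← hν, ← natCast_wdot, ← natCast_wdot] at this
    omega
  refine ⟨ν, fun α hα β hβ => ⟨hlt α hα β hβ, fun h => ?_⟩⟩
  rcases hr.1 α β with hαβ | rfl | hβα
  · exact hαβ
  · exact absurd h (lt_irrefl _)
  · exact absurd (hlt β hβ α hα hβα) h.not_gt

/-- **Bayer's weight vector lemma.** For any monomial order `≺` on `k[x₀,…,xₙ]` and any
finite set `A` of monomials, there is a weight vector `ω ∈ ℕ^{n+1}` such that for all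
`α, β ∈ A`, `α ≺ β` iff `ω·α < ω·β`. -/
theorem weight_vector_represents_monomial_order {n : ℕ} (k : Type*) [Field k]
    (r : Mon n → Mon n → Prop) (hr : IsMonomialOrder r) (A : Finset (Mon n)) :
    ∃ ω : Fin (n + 1) → ℕ, ∀ α ∈ A, ∀ β ∈ A, (r α β ↔ wdot ω α < wdot ω β) :=
  weight_vector_represents_monomial_order_general r hr A
end

section
/- Fix a monomial order ≺ on k[x_0,…,x_n], a weight vector ω ∈ ℕ^{n+1} representing ≺ on monomials of degree ≤ r (i.e., for monomials α, β of degree at most r, α ≺ β iff ω·α < ω·β), and the G_m-action t·x^α = t^{−ω·α}x^α. Let I be a homogeneous ideal generated in degrees ≤ r over a field K with initial ideal J = in_≺ I. If I is fixed by the action of every t ∈ K \ {0} (i.e., t·I = I for all t) and K is infinite, then I = J, i.e., I is a monomial ideal. -/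
open MvPolynomial
open scoped Pointwise

/-- Total degree `|α|` of an exponent vector. -/
def mdeg {n : ℕ} (α : Mon n) : ℕ := ∑ i, α i

/-- `α` is the leading exponent of `f` w.r.t. `r`. -/
def IsLeadExp {k : Type*} [Field k] {n : ℕ} (r : Mon n → Mon n → Prop)
    (f : MvPolynomial (Fin (n + 1)) k) (α : Mon n) : Prop :=
  α ∈ f.support ∧ ∀ β ∈ f.support, β ≠ α → r β α

/-- The initial ideal `in_≺(I)`. -/
noncomputable def initialIdeal (k : Type*) [Field k] {n : ℕ} (r : Mon n → Mon n → Prop)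
    (I : Ideal (MvPolynomial (Fin (n + 1)) k)) : Ideal (MvPolynomial (Fin (n + 1)) k) :=
  Ideal.span {m | ∃ f ∈ I, f ≠ 0 ∧ ∃ α : Mon n, IsLeadExp r f α ∧ m = monomial α (1 : k)}

/-- A homogeneous ideal. -/
def IsHomogIdeal (k : Type*) [Field k] {n : ℕ}
    (I : Ideal (MvPolynomial (Fin (n + 1)) k)) : Prop :=
  ∀ f ∈ I, ∀ d : ℕ, homogeneousComponent d f ∈ I

/-- The `G_m`-action of `t` on `K[x₀,…,xₙ]` given by `t · x^α = t^{−ω·α} x^α`. -/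
noncomputable def gmAct {A : Type*} [CommRing A] {n : ℕ} (ω : Fin (n + 1) → ℕ) (t : Aˣ)
    (f : MvPolynomial (Fin (n + 1)) A) : MvPolynomial (Fin (n + 1)) A :=
  ∑ α ∈ f.support, monomial α ((↑(t⁻¹ ^ wdot ω α) : A) * coeff α f)

/-- The ideal `t · I`. -/
noncomputable def gmActIdeal {A : Type*} [CommRing A] {n : ℕ} (ω : Fin (n + 1) → ℕ)
    (t : Aˣ) (I : Ideal (MvPolynomial (Fin (n + 1)) A)) :
    Ideal (MvPolynomial (Fin (n + 1)) A) :=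
  Ideal.span (gmAct ω t '' (I : Set (MvPolynomial (Fin (n + 1)) A)))

lemma mdeg_eq {n : ℕ} (α : Mon n) : mdeg α = Finsupp.degree α := by
  exact (Finset.sum_subset (Finset.subset_univ _)
    (fun i _ hi => Finsupp.notMem_support_iff.mp hi)).symm

lemma coeff_gmAct {K : Type*} [CommRing K] {n : ℕ} (ω : Fin (n+1) → ℕ) (t : Kˣ)
    (f : MvPolynomial (Fin (n+1)) K) (β : Mon n) :
    coeff β (gmAct ω t f) = (↑(t⁻¹ ^ wdot ω β) : K) * coeff β f := by
  classical
  rw [gmAct, coeff_sum]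
  simp only [coeff_monomial]
  rw [Finset.sum_ite_eq' f.support β (fun α => (↑(t⁻¹ ^ wdot ω α) : K) * coeff α f)]
  by_cases hβ : β ∈ f.support
  · simp [hβ]
  · simp [hβ, MvPolynomial.notMem_support_iff.mp hβ]

lemma term_mem {K : Type*} [Field K] [Infinite K] {n : ℕ}
    (ro : Mon n → Mon n → Prop) (hro : IsMonomialOrder ro)
    (r : ℕ) (ω : Fin (n + 1) → ℕ)
    (hω : ∀ α β : Mon n, mdeg α ≤ r → mdeg β ≤ r → (ro α β ↔ wdot ω α < wdot ω β))
    (I : Ideal (MvPolynomial (Fin (n + 1)) K))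
    (hfix : ∀ t : Kˣ, gmActIdeal ω t I = I) :
    ∀ m : ℕ, ∀ f ∈ I, ∀ d : ℕ, d ≤ r → f.IsHomogeneous d → f.support.card = m →
      ∀ α₀ ∈ f.support, monomial α₀ (coeff α₀ f) ∈ I := by
  intro m
  induction m using Nat.strong_induction_on with
  | _ m ih =>
  intro f hfI d hd hhom hcard α₀ hα₀
  classical
  have hdegs : ∀ α ∈ f.support, mdeg α = d := by
    intro α hα
    rw [mdeg_eq, Finsupp.degree_eq_weight_one]
    exact hhom (mem_support_iff.mp hα)
  have hwne : ∀ α ∈ f.support, α ≠ α₀ → wdot ω α ≠ wdot ω α₀ := by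
    intro α hα hne
    rcases hro.1 α α₀ with h | h | h
    · exact Nat.ne_of_lt ((hω α α₀ (le_of_eq_of_le (hdegs α hα) hd)
        (le_of_eq_of_le (hdegs α₀ hα₀) hd)).mp h)
    · exact absurd h hne
    · exact (Nat.ne_of_lt ((hω α₀ α (le_of_eq_of_le (hdegs α₀ hα₀) hd)
        (le_of_eq_of_le (hdegs α hα) hd)).mp h)).symm
  set W : Mon n → ℕ := fun α => wdot ω α with hWdef
  set e : Mon n → ℕ := fun α => max (W α) (W α₀) - min (W α) (W α₀) with hedef
  let B : Finset K := insert 0 (f.support.biUnion fun α =>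
    (Polynomial.nthRoots (e α) (1:K)).toFinset)
  obtain ⟨c, hcB⟩ := Infinite.exists_notMem_finset B
  have hc0 : c ≠ 0 := fun h => hcB (by simp [B, h])
  have hpow : ∀ α ∈ f.support, α ≠ α₀ → c ^ W α ≠ c ^ W α₀ := by
    intro α hα hne heq
    have hwne' : W α ≠ W α₀ := hwne α hα hne
    have he : 0 < e α := by simp only [hedef]; omega
    have hroot : c ^ e α = 1 := by
      rcases lt_or_gt_of_ne hwne' with h | h
      · have h1' : c ^ W α * c ^ e α = c ^ W α * 1 := by
          rw [mul_one, ← pow_add, heq]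
          congr 1
          simp only [hedef]; omega
        exact mul_left_cancel₀ (pow_ne_zero _ hc0) h1'
      · have h1' : c ^ W α₀ * c ^ e α = c ^ W α₀ * 1 := by
          rw [mul_one, ← pow_add, ← heq]
          congr 1
          simp only [hedef]; omega
        exact mul_left_cancel₀ (pow_ne_zero _ hc0) h1'
    exact hcB (Finset.mem_insert_of_mem (Finset.mem_biUnion.mpr
      ⟨α, hα, Multiset.mem_toFinset.mpr ((Polynomial.mem_nthRoots he).mpr hroot)⟩))
  have hpowinv : ∀ α ∈ f.support, α ≠ α₀ → c⁻¹ ^ W α ≠ c⁻¹ ^ W α₀ := by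
    intro α hα hne h
    rw [inv_pow, inv_pow] at h
    exact hpow α hα hne (inv_injective h)
  set t : Kˣ := Units.mk0 c hc0 with ht
  have htval : ∀ k : ℕ, (↑(t⁻¹ ^ k) : K) = c⁻¹ ^ k := by
    intro k
    simp [ht, Units.val_pow_eq_pow_val, inv_pow]
  set g := gmAct ω t f - C (c⁻¹ ^ W α₀) * f with hg
  have hgcoeff : ∀ β, coeff β g = (c⁻¹ ^ W β - c⁻¹ ^ W α₀) * coeff β f := by
    intro β
    rw [hg, coeff_sub, coeff_gmAct, coeff_C_mul, htval, sub_mul]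
  have hgI : g ∈ I := by
    apply Ideal.sub_mem
    · have h2 : gmAct ω t f ∈ gmActIdeal ω t I := Ideal.subset_span ⟨f, hfI, rfl⟩
      rwa [hfix t] at h2
    · exact Ideal.mul_mem_left _ _ hfI
  have hgsupp : g.support = f.support.erase α₀ := by
    ext β
    rw [mem_support_iff, hgcoeff, Finset.mem_erase]
    constructor
    · intro h
      have hβf : coeff β f ≠ 0 := right_ne_zero_of_mul h
      refine ⟨?_, mem_support_iff.mpr hβf⟩
      rintro rfl
      simp at h
    · rintro ⟨hne, hβf⟩
      exact mul_ne_zero (sub_ne_zero_of_ne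
        (hpowinv β hβf hne)) (mem_support_iff.mp hβf)
  have hghom : g.IsHomogeneous d := by
    intro β hβ
    rw [hgcoeff] at hβ
    exact hhom (right_ne_zero_of_mul hβ)
  have hgcard : g.support.card < m := by
    rw [hgsupp, ← hcard]
    exact Finset.card_erase_lt_of_mem hα₀
  have hterms : ∀ β ∈ f.support, β ≠ α₀ → monomial β (coeff β f) ∈ I := by
    intro β hβ hne
    have hβg : β ∈ g.support := by
      rw [hgsupp]; exact Finset.mem_erase.mpr ⟨hne, hβ⟩
    have h3 := ih _ hgcard g hgI d hd hghom rfl β hβg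
    rw [hgcoeff] at h3
    have hu : (c⁻¹ ^ W β - c⁻¹ ^ W α₀) ≠ 0 := sub_ne_zero_of_ne (hpowinv β hβ hne)
    have h4 : C ((c⁻¹ ^ W β - c⁻¹ ^ W α₀)⁻¹) *
        monomial β ((c⁻¹ ^ W β - c⁻¹ ^ W α₀) * coeff β f) ∈ I :=
      Ideal.mul_mem_left _ _ h3
    rwa [C_mul_monomial, ← mul_assoc, inv_mul_cancel₀ hu, one_mul] at h4
  have hsum : ∑ β ∈ f.support.erase α₀, monomial β (coeff β f) ∈ I :=
    Ideal.sum_mem _ (fun β hβ =>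
      hterms β (Finset.mem_of_mem_erase hβ) (Finset.ne_of_mem_erase hβ))
  have hassemble : monomial α₀ (coeff α₀ f)
      = f - ∑ β ∈ f.support.erase α₀, monomial β (coeff β f) := by
    rw [eq_sub_iff_add_eq]
    conv_rhs => rw [f.as_sum]
    exact Finset.add_sum_erase _ _ hα₀
  rw [hassemble]
  exact Ideal.sub_mem _ hfI hsum

lemma support_span_monomials {K : Type*} [Field K] {n : ℕ}
    (I : Ideal (MvPolynomial (Fin (n + 1)) K))
    (S : Set (MvPolynomial (Fin (n + 1)) K))
    (hS : ∀ p ∈ S, ∃ α : Mon n, p = monomial α (1:K) ∧ monomial α (1:K) ∈ I) :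
    ∀ f ∈ Ideal.span S, ∀ β ∈ f.support, monomial β (1:K) ∈ I := by
  classical
  intro f hf
  induction hf using Submodule.span_induction with
  | mem p hp =>
    obtain ⟨α, rfl, hαI⟩ := hS p hp
    intro β hβ
    rw [support_monomial, if_neg (one_ne_zero (α := K))] at hβ
    rw [Finset.mem_singleton] at hβ
    rwa [hβ]
  | zero => intro β hβ; simp at hβ
  | add x y hx hy ihx ihy =>
    intro β hβ
    rcases Finset.mem_union.mp (MvPolynomial.support_add hβ) with h | h
    · exact ihx β h
    · exact ihy β h
  | smul a x hx ihx =>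
    intro β hβ
    have hβ' : β ∈ a.support + x.support := by
      apply MvPolynomial.support_mul
      simpa using hβ
    rw [Finset.mem_add] at hβ'
    obtain ⟨γ, hγ, δ, hδ, rfl⟩ := hβ'
    have : monomial (γ + δ) (1:K) = monomial γ (1:K) * monomial δ (1:K) := by
      rw [monomial_mul, one_mul]
    rw [this]
    exact Ideal.mul_mem_left _ _ (ihx δ hδ)

/-- If `ω` represents the monomial order `≺` on monomials of degree `≤ r`, and `I` is a
homogeneous ideal generated in degrees `≤ r` over an infinite field `K` which is fixed by
the `G_m`-action of every `t ∈ K^×`, then `I = in_≺ I`, i.e. `I` is a monomial ideal. -/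
theorem fixed_ideal_is_monomial (K : Type*) [Field K] [Infinite K] {n : ℕ}
    (ro : Mon n → Mon n → Prop) (hro : IsMonomialOrder ro)
    (r : ℕ) (ω : Fin (n + 1) → ℕ)
    (hω : ∀ α β : Mon n, mdeg α ≤ r → mdeg β ≤ r → (ro α β ↔ wdot ω α < wdot ω β))
    (I : Ideal (MvPolynomial (Fin (n + 1)) K)) (hI : IsHomogIdeal K I)
    (hgen : ∃ G : Set (MvPolynomial (Fin (n + 1)) K), I = Ideal.span G ∧
      ∀ f ∈ G, ∃ s : ℕ, s ≤ r ∧ f.IsHomogeneous s)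
    (hfix : ∀ t : Kˣ, gmActIdeal ω t I = I) :
    I = initialIdeal K ro I := by
  classical
  obtain ⟨G, hG, hGdeg⟩ := hgen
  -- every element of G has all its monomials in I
  have hGterm : ∀ g ∈ G, ∀ β ∈ g.support, monomial β (1:K) ∈ I := by
    intro g hg β hβ
    obtain ⟨s, hs, hhom⟩ := hGdeg g hg
    have hgI : g ∈ I := hG ▸ Ideal.subset_span hg
    have h1 : monomial β (coeff β g) ∈ I :=
      term_mem ro hro r ω hω I hfix g.support.card g hgI s hs hhom rfl β hβ
    have hc : coeff β g ≠ 0 := mem_support_iff.mp hβ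
    have h2 : C (coeff β g)⁻¹ * monomial β (coeff β g) ∈ I := Ideal.mul_mem_left _ _ h1
    rwa [C_mul_monomial, inv_mul_cancel₀ hc] at h2
  -- the set of monomials of I
  set S : Set (MvPolynomial (Fin (n + 1)) K) :=
    {p | ∃ α : Mon n, p = monomial α (1:K) ∧ monomial α (1:K) ∈ I} with hSdef
  have hIS : I ≤ Ideal.span S := by
    rw [hG]
    apply Ideal.span_le.mpr
    intro g hg
    have : g = ∑ β ∈ g.support, C (coeff β g) * monomial β (1:K) := by
      conv_lhs => rw [g.as_sum]
      refine Finset.sum_congr rfl (fun β _ => ?_)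
      rw [C_mul_monomial, mul_one]
    rw [SetLike.mem_coe, this]
    exact Ideal.sum_mem _ (fun β hβ => Ideal.mul_mem_left _ _
      (Ideal.subset_span ⟨β, rfl, hGterm g hg β hβ⟩))
  -- key: every f ∈ I has all its monomials in I
  have key : ∀ f ∈ I, ∀ β ∈ f.support, monomial β (1:K) ∈ I := by
    intro f hf
    exact support_span_monomials I S (fun p hp => hp) f (hIS hf)
  apply le_antisymm
  · -- I ⊆ in(I)
    intro f hf
    have : f = ∑ β ∈ f.support, C (coeff β f) * monomial β (1:K) := by
      conv_lhs => rw [f.as_sum]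
      refine Finset.sum_congr rfl (fun β _ => ?_)
      rw [C_mul_monomial, mul_one]
    rw [this]
    refine Ideal.sum_mem _ (fun β hβ => Ideal.mul_mem_left _ _ (Ideal.subset_span ?_))
    refine ⟨monomial β (1:K), key f hf β hβ, ?_, β, ⟨?_, ?_⟩, rfl⟩
    · exact fun h => (one_ne_zero (α := K)) (monomial_eq_zero.mp h)
    · rw [support_monomial, if_neg (one_ne_zero (α := K))]; exact Finset.mem_singleton_self β
    · intro γ hγ hne
      rw [support_monomial, if_neg (one_ne_zero (α := K)), Finset.mem_singleton] at hγ
      exact absurd hγ hne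
  · -- in(I) ⊆ I
    apply Ideal.span_le.mpr
    rintro m ⟨f, hfI, hf0, α, ⟨hαsupp, -⟩, rfl⟩
    exact key f hfI α hαsupp
end

section
/- Let X be a separated scheme locally of finite type over a field k with a G_m-action. For any k-algebra A, the restriction map X^+(A) → X(A) sending a G_m-equivariant morphism φ : 𝔸^1_A → X to its restriction φ|_{{1}×Spec A} is injective. -/
/-!
Let `j : Spec A[T, T⁻¹] ⟶ Spec A[T]` be the inclusion of `G_m × Spec A`. Equivariance says
that `j ≫ φ` is the orbit map `t ↦ t · φ(1)`, so it is determined by `restrictAtOne A φ`.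
Since `X` is separated, the equalizer of `φ` and `ψ` is a closed subscheme of the affine
scheme `Spec A[T]` through which `j` factors; as `A[T] → A[T, T⁻¹]` is injective, its ideal
vanishes and the equalizer is everything.
-/

open AlgebraicGeometry CategoryTheory Polynomial

/-- A `G_m`-action on a scheme `X`, described on its functor of points: a natural action
of `Gm(R) = Rˣ` on `X(R) = (Spec R ⟶ X)` for every commutative ring `R`. -/
structure GmActionOn (X : Scheme) where
  smul : ∀ (R : CommRingCat), Rˣ → (Spec R ⟶ X) → (Spec R ⟶ X)
  one_smul : ∀ (R : CommRingCat) (x : Spec R ⟶ X), smul R 1 x = x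
  mul_smul : ∀ (R : CommRingCat) (t s : Rˣ) (x : Spec R ⟶ X),
    smul R (t * s) x = smul R t (smul R s x)
  naturality : ∀ {R S : CommRingCat} (f : R ⟶ S) (t : Rˣ) (x : Spec R ⟶ X),
    smul S (Units.map f.hom.toMonoidHom t) (Spec.map f ≫ x) =
      Spec.map f ≫ smul R t x

/-- A morphism `φ : 𝔸¹_A = Spec A[T] ⟶ X` is `G_m`-equivariant (for the scaling action on
`𝔸¹_A`, trivial on `A`): for any `R`-point `g` of `𝔸¹_A` and any `t ∈ Rˣ`,
`t · φ(g) = φ(t · g)`, where `t · g` rescales the coordinate `T`. -/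
def IsEquivariantFamily {X : Scheme} (act : GmActionOn X) (A : Type) [CommRing A]
    (φ : Spec (CommRingCat.of (Polynomial A)) ⟶ X) : Prop :=
  ∀ (R : CommRingCat) (t : Rˣ) (g : CommRingCat.of (Polynomial A) ⟶ R),
    act.smul R t (Spec.map g ≫ φ) =
      Spec.map (CommRingCat.ofHom
        (Polynomial.eval₂RingHom (g.hom.comp Polynomial.C)
          ((t : ↥R) * g.hom Polynomial.X))) ≫ φ

/-- Restriction of a family `φ : 𝔸¹_A ⟶ X` to the fiber `{1} × Spec A`. -/
noncomputable def restrictAtOne {X : Scheme} (A : Type) [CommRing A]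
    (φ : Spec (CommRingCat.of (Polynomial A)) ⟶ X) : Spec (CommRingCat.of A) ⟶ X :=
  Spec.map (CommRingCat.ofHom (Polynomial.evalRingHom (1 : A))) ≫ φ

namespace AlgebraicGeometry

lemma Scheme.isSeparated_of_isSeparated_of_isAffine {X Y : Scheme} [IsAffine Y] (f : X ⟶ Y)
    [IsSeparated f] : X.IsSeparated :=
  ⟨by rw [← Limits.terminal.comp_from f]; infer_instance⟩

lemma Spec_map_appTop_injective {R S : CommRingCat} (f : R ⟶ S) (hf : Function.Injective f) :
    Function.Injective (Spec.map f).appTop := by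
  have hcomp : (Spec.map f).appTop = (Scheme.ΓSpecIso R).hom ≫ f ≫ (Scheme.ΓSpecIso S).inv := by
    rw [Scheme.ΓSpecIso_inv_naturality, Iso.hom_inv_id_assoc]
  rw [hcomp, hom_comp, hom_comp]
  exact (ConcreteCategory.bijective_of_isIso (Scheme.ΓSpecIso S).inv).injective.comp <|
    hf.comp (ConcreteCategory.bijective_of_isIso (Scheme.ΓSpecIso R).hom).injective

lemma Scheme.ext_of_injective_appTop {W Y X : Scheme} [IsAffine Y] [X.IsSeparated]
    (ι : W ⟶ Y) (hι : Function.Injective ι.appTop) {φ ψ : Y ⟶ X} (h : ι ≫ φ = ι ≫ ψ) :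
    φ = ψ := by
  have hfactor : Limits.equalizer.lift ι h ≫ Limits.equalizer.ι φ ψ = ι :=
    Limits.equalizer.lift_ι ι h
  have : IsIso (Limits.equalizer.ι φ ψ) := by
    refine IsClosedImmersion.isIso_of_injective_of_isAffine (fun a b hab ↦ hι ?_)
    rw [← hfactor, Scheme.Hom.comp_appTop]
    exact congrArg (Limits.equalizer.lift ι h).appTop hab
  rw [← cancel_epi (Limits.equalizer.ι φ ψ), Limits.equalizer.condition]

end AlgebraicGeometry

namespace IsEquivariantFamily

variable {X : Scheme} {act : GmActionOn X} {A : Type} [CommRing A]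
  {φ : Spec (CommRingCat.of (Polynomial A)) ⟶ X}

lemma toLaurent_comp (hφ : IsEquivariantFamily act A φ) :
    Spec.map (CommRingCat.ofHom (toLaurent (R := A))) ≫ φ =
      act.smul _ (LaurentPolynomial.isUnit_T 1).unit
        (Spec.map (CommRingCat.ofHom LaurentPolynomial.C) ≫ restrictAtOne A φ) := by
  have hrestrict : Spec.map (CommRingCat.ofHom LaurentPolynomial.C) ≫ restrictAtOne A φ =
      Spec.map (CommRingCat.ofHom (LaurentPolynomial.C.comp (evalRingHom (1 : A)))) ≫ φ := by
    rw [restrictAtOne, ← Category.assoc, ← Spec.map_comp]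
    rfl
  rw [hrestrict, hφ]
  congr 3
  ext <;> simp

end IsEquivariantFamily

theorem attractor_restrictAtOne_injective_general (k : Type) [Field k] (X : Scheme)
    (sX : X ⟶ Spec (CommRingCat.of k)) (hsep : IsSeparated sX)
    (act : GmActionOn X)
    (A : Type) [CommRing A]
    (φ ψ : Spec (CommRingCat.of (Polynomial A)) ⟶ X)
    (hφ : IsEquivariantFamily act A φ) (hψ : IsEquivariantFamily act A ψ)
    (h1 : restrictAtOne A φ = restrictAtOne A ψ) :
    φ = ψ := by
  have : X.IsSeparated := Scheme.isSeparated_of_isSeparated_of_isAffine sX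
  refine Scheme.ext_of_injective_appTop _
    (Spec_map_appTop_injective (CommRingCat.ofHom toLaurent) toLaurent_injective) ?_
  rw [hφ.toLaurent_comp, hψ.toLaurent_comp, h1]

/-- For a separated scheme `X` locally of finite type over a field `k` with a
`G_m`-action, the restriction map `X⁺(A) → X(A)`, sending a `G_m`-equivariant morphism
`φ : 𝔸¹_A ⟶ X` to its restriction to `{1} × Spec A`, is injective. -/
theorem attractor_restrictAtOne_injective (k : Type) [Field k] (X : Scheme)
    (sX : X ⟶ Spec (CommRingCat.of k)) (hsep : IsSeparated sX)
    (hlft : LocallyOfFiniteType sX) (act : GmActionOn X)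
    (A : Type) [CommRing A] [Algebra k A]
    (φ ψ : Spec (CommRingCat.of (Polynomial A)) ⟶ X)
    (hφ : IsEquivariantFamily act A φ) (hψ : IsEquivariantFamily act A ψ)
    (h1 : restrictAtOne A φ = restrictAtOne A ψ) :
    φ = ψ :=
  attractor_restrictAtOne_injective_general k X sX hsep act A φ ψ hφ hψ h1
end
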